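/- The ternary sextic form q_3(x,y,z) = x^6 + y^6 + z^6 + 3(x^4 y^2 + x^2 y^4 + x^4 z^2 + x^2 z^4 + y^4 z^2 + y^2 z^4) - 100 x^2 y^2 z^2 is irreducible over the real numbers. -/

import Mathlib

/-!
With `S = x² + y² + z²` one has `q₃ = S³ - 106 (xyz)²`, so on each coordinate plane `q₃`
restricts to `(x_i² + x_j²)³`, and `x_i² + x_j²` is prime. In a factorization `q₃ = f g` the
restrictions of `f` and `g` are then associated to powers of that prime, and comparing total
degrees forces `deg f ∈ {0, 2, 4, 6}`. A factor of degree 2 restricts to `c (x_i² + x_j²)` on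
every plane with the same `c`, hence equals `c S`; but `S` vanishes at `(3, 4, 5i)` and `q₃`
does not.
-/

open MvPolynomial

noncomputable def q3 : MvPolynomial (Fin 3) ℝ :=
  X 0 ^ 6 + X 1 ^ 6 + X 2 ^ 6
    + 3 * (X 0 ^ 4 * X 1 ^ 2 + X 0 ^ 2 * X 1 ^ 4 + X 0 ^ 4 * X 2 ^ 2
        + X 0 ^ 2 * X 2 ^ 4 + X 1 ^ 4 * X 2 ^ 2 + X 1 ^ 2 * X 2 ^ 4)
    - 100 * (X 0 ^ 2 * X 1 ^ 2 * X 2 ^ 2)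

theorem Polynomial.irreducible_X_sq_add_C {A : Type*} [CommRing A] [IsDomain A] {a : A}
    (h : ∀ c : A, c ^ 2 + a ≠ 0) : Irreducible (Polynomial.X ^ 2 + Polynomial.C a) := by
  have hm : (Polynomial.X ^ 2 + Polynomial.C a).Monic := Polynomial.monic_X_pow_add_C a two_ne_zero
  by_contra hirr
  obtain ⟨c₁, c₂, h₀, h₁⟩ :=
    (hm.not_irreducible_iff_exists_add_mul_eq_coeff (Polynomial.natDegree_X_pow_add_C)).mp hirr
  simp only [coeff_add, coeff_X_pow, coeff_C_zero, coeff_C_succ, OfNat.zero_ne_ofNat,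
    OfNat.one_ne_ofNat, ↓reduceIte, zero_add, add_zero] at h₀ h₁
  exact h c₁ (by rw [h₀, eq_neg_of_add_eq_zero_right h₁.symm]; ring)

namespace MvPolynomial

theorem irreducible_X_sq_add_X_sq {σ R : Type*} [CommRing R] [LinearOrder R]
    [IsStrictOrderedRing R] {i j : σ} (hij : i ≠ j) :
    Irreducible (X i ^ 2 + X j ^ 2 : MvPolynomial σ R) := by
  classical
  let e : MvPolynomial σ R ≃ₐ[R] Polynomial (MvPolynomial {k // k ≠ i} R) :=
    (renameEquiv R (Equiv.optionSubtypeNe i).symm).trans (optionEquivLeft R _)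
  have he : e (X i ^ 2 + X j ^ 2) = Polynomial.X ^ 2 + Polynomial.C (X ⟨j, hij.symm⟩ ^ 2) := by
    simp [e, dif_neg hij.symm, optionEquivLeft_X_some]
  rw [← MulEquiv.irreducible_iff e, he]
  refine Polynomial.irreducible_X_sq_add_C fun c hc => ?_
  have h1 := congrArg (eval 1) hc
  simp only [map_add, map_pow, eval_X, Pi.one_apply, one_pow, map_zero] at h1
  nlinarith [sq_nonneg (eval 1 c)]

section SubstZero

variable {σ R : Type*} [CommSemiring R] [DecidableEq σ]

noncomputable def substZero (k : σ) : MvPolynomial σ R →ₐ[R] MvPolynomial σ R :=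
  aeval (Function.update X k 0)

@[simp]
theorem substZero_X (k i : σ) :
    substZero k (X i : MvPolynomial σ R) = if i = k then 0 else X i := by
  simp [substZero, Function.update_apply]

theorem substZero_monomial (k : σ) (m : σ →₀ ℕ) (r : R) :
    substZero k (monomial m r) = if m k = 0 then monomial m r else 0 := by
  rw [substZero, aeval_monomial, monomial_eq, algebraMap_eq]
  split_ifs with hm
  · congr 1
    refine Finsupp.prod_congr fun i hi => ?_
    rw [Function.update_of_ne (by rintro rfl; exact Finsupp.mem_support_iff.mp hi hm)]
  · rw [Finsupp.prod, Finset.prod_eq_zero (Finsupp.mem_support_iff.mpr hm) (by simp [hm]),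
      mul_zero]

theorem coeff_substZero (k : σ) (p : MvPolynomial σ R) (m : σ →₀ ℕ) :
    coeff m (substZero k p) = if m k = 0 then coeff m p else 0 := by
  induction p using induction_on' with
  | monomial n r =>
    rw [substZero_monomial]
    by_cases hnm : n = m
    · subst hnm; split_ifs <;> simp
    · split_ifs <;> simp [coeff_monomial, hnm]
  | add p q hp hq => simp only [map_add, coeff_add, hp, hq]; split_ifs <;> simp

theorem totalDegree_substZero_le (k : σ) (p : MvPolynomial σ R) :
    (substZero k p).totalDegree ≤ p.totalDegree := by
  refine totalDegree_le_of_support_subset fun m hm => ?_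
  rw [mem_support_iff, coeff_substZero] at hm
  rw [mem_support_iff]
  split_ifs at hm
  · exact hm
  · exact absurd rfl hm

theorem IsHomogeneous.substZero {p : MvPolynomial σ R} {n : ℕ} (hp : p.IsHomogeneous n)
    (k : σ) : (substZero k p).IsHomogeneous n := fun m hm => by
  rw [coeff_substZero] at hm
  split_ifs at hm
  · exact hp hm
  · exact absurd rfl hm

theorem eq_zero_of_forall_substZero_eq_zero [Fintype σ] {p : MvPolynomial σ R}
    (hp : p.totalDegree < Fintype.card σ) (h : ∀ k, substZero k p = 0) : p = 0 := by
  ext m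
  rw [coeff_zero]
  by_cases hm : ∃ k, m k = 0
  · obtain ⟨k, hk⟩ := hm
    simpa [coeff_substZero, hk] using congrArg (coeff m) (h k)
  · push Not at hm
    refine coeff_eq_zero_of_totalDegree_lt (lt_of_lt_of_le hp ?_)
    calc Fintype.card σ = ∑ _ : σ, 1 := by simp
      _ ≤ ∑ i, m i := Finset.sum_le_sum fun i _ => Nat.one_le_iff_ne_zero.mpr (hm i)
      _ = ∑ i ∈ m.support, m i := by
        rw [Finset.eq_univ_of_forall fun i => Finsupp.mem_support_iff.mpr (hm i)]

end SubstZero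

section Field

variable {σ K : Type*} [Field K]

theorem isUnit_of_totalDegree_eq_zero {f : MvPolynomial σ K} (hf : f ≠ 0)
    (hdeg : f.totalDegree = 0) : IsUnit f := by
  rw [totalDegree_eq_zero_iff_eq_C] at hdeg
  rw [hdeg] at hf ⊢
  exact (Ne.isUnit fun h => hf (by rw [h, C_0])).map C

theorem exists_totalDegree_eq_of_substZero_mul_eq_pow [DecidableEq σ]
    {f g p : MvPolynomial σ K} {k : σ} {d n : ℕ} (hp : Prime p) (hpd : p.IsHomogeneous d)
    (hfg : substZero k f * substZero k g = p ^ n) (hdeg : (f * g).totalDegree ≤ d * n) :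
    ∃ i ≤ n, f.totalDegree = d * i ∧ ∃ c, substZero k f = C c * p ^ i := by
  have hne : substZero k f * substZero k g ≠ 0 := hfg ▸ pow_ne_zero n hp.ne_zero
  obtain ⟨i, j, b, c, hij, hbc, hf, hg⟩ := mul_eq_mul_prime_pow hp (hfg.trans (one_mul _).symm)
  obtain ⟨b, -, rfl⟩ := isUnit_iff_eq_C_of_isReduced.mp (IsUnit.of_mul_eq_one c hbc.symm)
  obtain ⟨c, -, rfl⟩ := isUnit_iff_eq_C_of_isReduced.mp (IsUnit.of_mul_eq_one_right _ hbc.symm)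
  have hdf : (substZero k f).totalDegree = d * i :=
    hf ▸ ((hpd.pow i).C_mul b).totalDegree (hf ▸ left_ne_zero_of_mul hne)
  have hdg : (substZero k g).totalDegree = d * j :=
    hg ▸ ((hpd.pow j).C_mul c).totalDegree (hg ▸ right_ne_zero_of_mul hne)
  have hf0 : f ≠ 0 := by rintro rfl; simp at hne
  have hg0 : g ≠ 0 := by rintro rfl; simp at hne
  rw [totalDegree_mul_of_isDomain hf0 hg0, ← hij, mul_add] at hdeg
  have := totalDegree_substZero_le k f
  have := totalDegree_substZero_le k g
  exact ⟨i, by omega, by omega, b, hf⟩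

end Field

section SumSq

variable {σ R : Type*} [Fintype σ] [CommSemiring R]

noncomputable def sumSq : MvPolynomial σ R := ∑ i, X i ^ 2

theorem isHomogeneous_sumSq : (sumSq : MvPolynomial σ R).IsHomogeneous 2 :=
  IsHomogeneous.sum _ _ _ fun i _ => by simpa using (isHomogeneous_X R i).pow 2

theorem coeff_single_two_sumSq [DecidableEq σ] [Nontrivial R] (i : σ) :
    coeff (Finsupp.single i 2) (sumSq : MvPolynomial σ R) = 1 := by
  simp [sumSq, coeff_sum, coeff_X_pow, Finsupp.single_left_inj two_ne_zero]

theorem coeff_single_two_eq_of_substZero_eq_C_mul_sumSq [DecidableEq σ] [Nontrivial R]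
    {f : MvPolynomial σ R} {k i : σ} (hki : k ≠ i) {c : R}
    (h : substZero k f = C c * substZero k sumSq) : coeff (Finsupp.single i 2) f = c := by
  simpa [coeff_substZero, coeff_C_mul, Finsupp.single_apply, hki, coeff_single_two_sumSq]
    using congrArg (coeff (Finsupp.single i 2)) h

end SumSq

end MvPolynomial

theorem q3_eq : q3 = sumSq ^ 3 - 106 * (X 0 * X 1 * X 2) ^ 2 := by
  simp only [q3, sumSq, Fin.sum_univ_three]
  ring

theorem substZero_q3 (k : Fin 3) : substZero k q3 = substZero k sumSq ^ 3 := by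
  rw [q3_eq, map_sub, map_mul, map_pow, map_pow]
  fin_cases k <;> simp

theorem prime_substZero_sumSq (k : Fin 3) :
    Prime (substZero k sumSq : MvPolynomial (Fin 3) ℝ) := by
  fin_cases k <;>
    simp only [sumSq, Fin.sum_univ_three, map_add, map_pow, substZero_X, Fin.isValue,
      Fin.zero_eta, Fin.mk_one, Fin.reduceFinMk, Fin.reduceEq, ↓reduceIte, ne_eq,
      OfNat.ofNat_ne_zero, not_false_eq_true, zero_pow, zero_add, add_zero] <;>
    exact (irreducible_X_sq_add_X_sq (by decide)).prime

theorem q3_ne_zero : q3 ≠ 0 := fun h => (prime_substZero_sumSq 0).ne_zero <|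
  pow_eq_zero_iff three_ne_zero |>.mp (by rw [← substZero_q3, h, map_zero])

theorem totalDegree_q3 : q3.totalDegree = 6 := by
  have hm : ((X 0 * X 1 * X 2) ^ 2 : MvPolynomial (Fin 3) ℝ).IsHomogeneous 6 :=
    (((isHomogeneous_X ℝ 0).mul (isHomogeneous_X ℝ 1)).mul (isHomogeneous_X ℝ 2)).pow 2
  refine IsHomogeneous.totalDegree ?_ q3_ne_zero
  rw [q3_eq, ← map_ofNat C 106]
  exact (isHomogeneous_sumSq.pow 3).sub (hm.C_mul 106)

theorem not_sumSq_dvd_q3 : ¬ (sumSq ∣ q3) := by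
  rintro ⟨h, hq⟩
  have := congrArg (aeval (![3, 4, 5 * Complex.I] : Fin 3 → ℂ)) hq
  rw [q3_eq] at this
  simp only [sumSq, Fin.sum_univ_three, map_sub, map_mul, map_add, map_pow, aeval_X, aeval_ofNat,
    Matrix.cons_val_zero, Matrix.cons_val_one, Matrix.cons_val] at this
  norm_num [mul_pow] at this

theorem eq_C_mul_sumSq_of_mul_eq_q3 {f g : MvPolynomial (Fin 3) ℝ} (hfg : f * g = q3)
    (hf : f.totalDegree = 2) : ∃ c, f = C c * sumSq := by
  have hk : ∀ k, ∃ c, substZero k f = C c * substZero k sumSq := fun k => by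
    obtain ⟨i, -, hi, c, hc⟩ := exists_totalDegree_eq_of_substZero_mul_eq_pow
      (prime_substZero_sumSq k) (isHomogeneous_sumSq.substZero k)
      (by rw [← map_mul, hfg, substZero_q3]) (by rw [hfg, totalDegree_q3])
    obtain rfl : i = 1 := by omega
    exact ⟨c, by rw [hc, pow_one]⟩
  choose c hc using hk
  have h1 : c 1 = c 0 := by
    rw [← coeff_single_two_eq_of_substZero_eq_C_mul_sumSq (i := 2) (by decide) (hc 1),
      coeff_single_two_eq_of_substZero_eq_C_mul_sumSq (by decide) (hc 0)]
  have h2 : c 2 = c 0 := by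
    rw [← coeff_single_two_eq_of_substZero_eq_C_mul_sumSq (i := 1) (by decide) (hc 2),
      coeff_single_two_eq_of_substZero_eq_C_mul_sumSq (by decide) (hc 0)]
  refine ⟨c 0, sub_eq_zero.mp (eq_zero_of_forall_substZero_eq_zero ?_ fun k => ?_)⟩
  · calc (f - C (c 0) * sumSq).totalDegree
        ≤ max f.totalDegree (C (c 0) * sumSq).totalDegree := totalDegree_sub _ _
      _ ≤ 2 := max_le hf.le (isHomogeneous_sumSq.C_mul (c 0)).totalDegree_le
      _ < Fintype.card (Fin 3) := by simp
  · fin_cases k <;> simp [hc, h1, h2]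

theorem totalDegree_ne_two_of_mul_eq_q3 {f g : MvPolynomial (Fin 3) ℝ} (hfg : f * g = q3) :
    f.totalDegree ≠ 2 := fun hf => by
  obtain ⟨c, rfl⟩ := eq_C_mul_sumSq_of_mul_eq_q3 hfg hf
  exact not_sumSq_dvd_q3 ⟨C c * g, by rw [← hfg]; ring⟩

theorem q3_irreducible : Irreducible q3 := by
  refine ⟨fun hu => ?_, fun f g hfg => ?_⟩
  · simpa [totalDegree_q3] using (isUnit_iff_totalDegree_of_isReduced.mp hu).2
  have hf0 : f ≠ 0 := by rintro rfl; exact q3_ne_zero (by simpa using hfg)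
  have hg0 : g ≠ 0 := by rintro rfl; exact q3_ne_zero (by simpa using hfg)
  have hsum : f.totalDegree + g.totalDegree = 6 := by
    rw [← totalDegree_mul_of_isDomain hf0 hg0, ← hfg, totalDegree_q3]
  obtain ⟨i, hi, hdeg, -⟩ := exists_totalDegree_eq_of_substZero_mul_eq_pow (k := 0)
    (prime_substZero_sumSq 0) (isHomogeneous_sumSq.substZero 0)
    (by rw [← map_mul, ← hfg, substZero_q3]) (by rw [← hfg, totalDegree_q3])
  interval_cases i
  · exact .inl (isUnit_of_totalDegree_eq_zero hf0 hdeg)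
  · exact (totalDegree_ne_two_of_mul_eq_q3 hfg.symm hdeg).elim
  · exact (totalDegree_ne_two_of_mul_eq_q3 (f := g) (g := f) (by rw [mul_comm, hfg])
      (by omega)).elim
  · exact .inr (isUnit_of_totalDegree_eq_zero hg0 (by omega))
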